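/- Fix real k_s, k_m, k_ℓ with 𝛂 := k_s + k_ℓ − 1/2 > −1 and k_m > 0; set 𝛃 = k_ℓ − 1/2. Let 1 ≤ i ≤ r and ξ = (ξ_1,…,ξ_i) ∈ D_k(Θ_i). Then every Gamma argument occurring in the following expression is a strictly positive real number, and the real number ∏_{j=1}^i (−2^{2𝛂−2𝛃−1} ξ_j / π) · Γ((ξ_j+𝛂+|𝛃|+1)/2) Γ((−ξ_j+𝛂+|𝛃|+1)/2) / (Γ((ξ_j−𝛂+|𝛃|+1)/2) Γ((−ξ_j−𝛂+|𝛃|+1)/2)) · ∏_{1≤q<p≤i} ((ξ_q²−ξ_p²)/4) · Γ((ξ_p−ξ_q)/2+k_m) Γ((−ξ_p−ξ_q)/2+k_m) / (Γ((ξ_p−ξ_q)/2−k_m+1) Γ((−ξ_p−ξ_q)/2−k_m+1)) is strictly positive. -/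

import Mathlib

/-!
Along `ξ` consecutive entries grow by at least `2 k_m > 0`, so `ξ` is increasing, lies in
`[α + 1 - |β|, 0)`, and distinct entries satisfy `ξ_q + 2 k_m ≤ ξ_p < 0`. These two inequalities
make every Gamma argument positive, hence every Gamma value positive; the remaining scalar factors
`-ξ_j` and `ξ_q² - ξ_p² = (ξ_p - ξ_q)(-ξ_p - ξ_q)` are positive as well.
-/

open Finset

theorem add_le_of_forall_add_le_succ {M : Type*} [AddCommMonoid M] [PartialOrder M]
    [IsOrderedAddMonoid M] {f : ℕ → M} {d : M} {n : ℕ} (hd : 0 ≤ d)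
    (hstep : ∀ j, j + 1 < n → f j + d ≤ f (j + 1)) {a b : ℕ} (hab : a < b) (hbn : b < n) :
    f a + d ≤ f b := by
  induction b, hab using Nat.le_induction with
  | base => exact hstep a hbn
  | succ b hab ih =>
    calc f a + d ≤ f b := ih (by omega)
      _ ≤ f b + d := le_add_of_nonneg_right hd
      _ ≤ f (b + 1) := hstep b hbn

theorem Real.Gamma_mul_Gamma_div_Gamma_mul_Gamma_pos {a b c d : ℝ} (ha : 0 < a) (hb : 0 < b)
    (hc : 0 < c) (hd : 0 < d) : 0 < Real.Gamma a * Real.Gamma b / (Real.Gamma c * Real.Gamma d) := by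
  positivity

theorem single_gamma_args_pos {α β x : ℝ} (hα : -1 < α) (hlow : α + 1 - |β| ≤ x) (hneg : x < 0) :
    0 < (x + α + |β| + 1) / 2 ∧ 0 < (-x + α + |β| + 1) / 2 ∧
      0 < (x - α + |β| + 1) / 2 ∧ 0 < (-x - α + |β| + 1) / 2 := by
  have := abs_nonneg β
  refine ⟨?_, ?_, ?_, ?_⟩ <;> linarith

theorem pair_gamma_args_pos {k x y : ℝ} (hk : 0 < k) (hgap : x + 2 * k ≤ y) (hneg : y < 0) :
    0 < (y - x) / 2 + k ∧ 0 < (-y - x) / 2 + k ∧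
      0 < (y - x) / 2 - k + 1 ∧ 0 < (-y - x) / 2 - k + 1 := by
  refine ⟨?_, ?_, ?_, ?_⟩ <;> linarith

theorem stmt7 (km α β : ℝ)
    (hα1 : -1 < α) (hkm : 0 < km)
    (i : ℕ)
    (ξ : ℕ → ℝ)
    (hd1 : ∃ n : ℕ, ξ 0 + |β| - α - 1 = 2 * (n : ℝ))
    (hd2 : ξ (i - 1) < 0)
    (hd3 : ∀ j : ℕ, j + 1 < i → ∃ n : ℕ, ξ (j + 1) - ξ j - 2 * km = 2 * (n : ℝ)) :
    (∀ j : ℕ, j < i →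
      0 < (ξ j + α + |β| + 1) / 2 ∧ 0 < (-ξ j + α + |β| + 1) / 2 ∧
      0 < (ξ j - α + |β| + 1) / 2 ∧ 0 < (-ξ j - α + |β| + 1) / 2) ∧
    (∀ q p : ℕ, q < p → p < i →
      0 < (ξ p - ξ q) / 2 + km ∧ 0 < (-ξ p - ξ q) / 2 + km ∧
      0 < (ξ p - ξ q) / 2 - km + 1 ∧ 0 < (-ξ p - ξ q) / 2 - km + 1) ∧
    0 < (∏ j ∈ Finset.range i,
        (-(2 : ℝ) ^ (2 * α - 2 * β - 1) * ξ j / Real.pi) *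
          (Real.Gamma ((ξ j + α + |β| + 1) / 2) * Real.Gamma ((-ξ j + α + |β| + 1) / 2) /
            (Real.Gamma ((ξ j - α + |β| + 1) / 2) * Real.Gamma ((-ξ j - α + |β| + 1) / 2)))) *
      ∏ p ∈ Finset.range i, ∏ q ∈ Finset.range i,
        if q < p then
          ((ξ q ^ 2 - ξ p ^ 2) / 4) *
            (Real.Gamma ((ξ p - ξ q) / 2 + km) * Real.Gamma ((-ξ p - ξ q) / 2 + km) /
              (Real.Gamma ((ξ p - ξ q) / 2 - km + 1) * Real.Gamma ((-ξ p - ξ q) / 2 - km + 1)))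
        else 1 := by
  obtain ⟨n₀, hn₀⟩ := hd1
  have hfirst : α + 1 - |β| ≤ ξ 0 := by linarith [n₀.cast_nonneg (α := ℝ)]
  have hgap : ∀ q p, q < p → p < i → ξ q + 2 * km ≤ ξ p := fun q p hqp hpi =>
    add_le_of_forall_add_le_succ (by positivity) (fun j hj => by
      obtain ⟨n, hn⟩ := hd3 j hj
      linarith [n.cast_nonneg (α := ℝ)]) hqp hpi
  have hle : ∀ q p, q ≤ p → p < i → ξ q ≤ ξ p := fun q p hqp hpi => by
    rcases hqp.lt_or_eq with hqp | rfl
    · linarith [hgap q p hqp hpi]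
    · rfl
  have hneg : ∀ j < i, ξ j < 0 := fun j hj => (hle j (i - 1) (by omega) (by omega)).trans_lt hd2
  have hsingle : ∀ j < i, _ := fun j hj =>
    single_gamma_args_pos hα1 (hfirst.trans (hle 0 j j.zero_le hj)) (hneg j hj)
  have hpair : ∀ q p, q < p → p < i → _ := fun q p hqp hpi =>
    pair_gamma_args_pos hkm (hgap q p hqp hpi) (hneg p hpi)
  refine ⟨hsingle, hpair, mul_pos (prod_pos fun j hj => ?_) (prod_pos fun p hp => prod_pos fun q _ => ?_)⟩
  · rw [mem_range] at hj
    obtain ⟨h₁, h₂, h₃, h₄⟩ := hsingle j hj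
    refine mul_pos (div_pos (mul_pos_of_neg_of_neg ?_ (hneg j hj)) Real.pi_pos)
      (Real.Gamma_mul_Gamma_div_Gamma_mul_Gamma_pos h₁ h₂ h₃ h₄)
    exact neg_neg_of_pos (by positivity)
  · rw [mem_range] at hp
    split_ifs with hqp
    · obtain ⟨h₁, h₂, h₃, h₄⟩ := hpair q p hqp hp
      have hsq : 0 < ξ q ^ 2 - ξ p ^ 2 := by
        nlinarith [hgap q p hqp hp, hneg p hp]
      exact mul_pos (by positivity) (Real.Gamma_mul_Gamma_div_Gamma_mul_Gamma_pos h₁ h₂ h₃ h₄)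
    · exact one_pos
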